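/- Let T be a weighted monogamous trigraph and let (X,Y) be a decomposition of T, with the block T_Y weighted as defined. Then α(T) = α(T_Y). -/

import Mathlib

structure Trigraph (V : Type*) where
  θ : V → V → ℤ
  symm : ∀ u v, θ u v = θ v u
  range : ∀ u v, u ≠ v → θ u v = -1 ∨ θ u v = 0 ∨ θ u v = 1

namespace Trigraph

variable {V : Type*}

/-- `u` and `v` form a strong edge. -/
def SEdge (T : Trigraph V) (u v : V) : Prop := u ≠ v ∧ T.θ u v = 1

/-- `u` and `v` form a strong antiedge. -/
def SAnti (T : Trigraph V) (u v : V) : Prop := u ≠ v ∧ T.θ u v = -1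

/-- `u` and `v` form a switchable pair. -/
def Switch (T : Trigraph V) (u v : V) : Prop := u ≠ v ∧ T.θ u v = 0

/-- `u` and `v` are adjacent. -/
def Adj (T : Trigraph V) (u v : V) : Prop := u ≠ v ∧ (T.θ u v = 0 ∨ T.θ u v = 1)

/-- `u` and `v` are antiadjacent. -/
def Anti (T : Trigraph V) (u v : V) : Prop := u ≠ v ∧ (T.θ u v = -1 ∨ T.θ u v = 0)

instance [DecidableEq V] (T : Trigraph V) (u v : V) : Decidable (T.Adj u v) :=
  inferInstanceAs (Decidable (u ≠ v ∧ (T.θ u v = 0 ∨ T.θ u v = 1)))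

instance [DecidableEq V] (T : Trigraph V) (u v : V) : Decidable (T.Anti u v) :=
  inferInstanceAs (Decidable (u ≠ v ∧ (T.θ u v = -1 ∨ T.θ u v = 0)))

instance [DecidableEq V] (T : Trigraph V) (u v : V) : Decidable (T.Switch u v) :=
  inferInstanceAs (Decidable (u ≠ v ∧ T.θ u v = 0))

instance [DecidableEq V] (T : Trigraph V) (u v : V) : Decidable (T.SAnti u v) :=
  inferInstanceAs (Decidable (u ≠ v ∧ T.θ u v = -1))

/-- A trigraph is monogamous if every vertex is in at most one switchable pair. -/
def Monogamous (T : Trigraph V) : Prop :=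
  ∀ v u w : V, T.Switch v u → T.Switch v w → u = w

/-- The complement trigraph. -/
def compl (T : Trigraph V) : Trigraph V where
  θ := fun u v => -(T.θ u v)
  symm := fun u v => congrArg Neg.neg (T.symm u v)
  range := fun u v h => by
    have := T.range u v h
    try dsimp only
    omega

def IsBull (T : Trigraph V) (x1 x2 x3 y z : V) : Prop :=
  T.Adj x1 x2 ∧ T.Adj x1 x3 ∧ T.Adj x2 x3 ∧
  T.Adj y x1 ∧ T.Anti y x2 ∧ T.Anti y x3 ∧ T.Anti y z ∧
  T.Adj z x2 ∧ T.Anti z x1 ∧ T.Anti z x3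

def BullFree (T : Trigraph V) : Prop := ∀ x1 x2 x3 y z : V, ¬ T.IsBull x1 x2 x3 y z

/-- `S` is strongly complete to `A`. -/
def SComplete (T : Trigraph V) (S A : Set V) : Prop := ∀ s ∈ S, ∀ a ∈ A, T.SEdge s a

/-- `S` is strongly anticomplete to `A`. -/
def SAnticomplete (T : Trigraph V) (S A : Set V) : Prop := ∀ s ∈ S, ∀ a ∈ A, T.SAnti s a

/-- A homogeneous set. -/
def HomSet (T : Trigraph V) (X : Set V) : Prop :=
  1 < X.ncard ∧ X.ncard < Nat.card V ∧
  ∀ v ∉ X, (∀ a ∈ X, T.SEdge v a) ∨ (∀ a ∈ X, T.SAnti v a)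

/-- `(A,B,C,D,E,F)` is a split of the homogeneous pair `(A,B)`. -/
def IsSplit (T : Trigraph V) (A B C D E F : Set V) : Prop :=
  A.Nonempty ∧ B.Nonempty ∧ Disjoint A B ∧
  Disjoint C D ∧ Disjoint C E ∧ Disjoint C F ∧
  Disjoint D E ∧ Disjoint D F ∧ Disjoint E F ∧
  C ∪ D ∪ E ∪ F = (A ∪ B)ᶜ ∧
  T.SComplete A (C ∪ E) ∧ T.SAnticomplete A (D ∪ F) ∧
  T.SComplete B (D ∪ E) ∧ T.SAnticomplete B (C ∪ F) ∧
  ¬ T.SComplete A B ∧ ¬ T.SAnticomplete A B ∧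
  3 ≤ (A ∪ B).ncard ∧ 3 ≤ (C ∪ D ∪ E ∪ F).ncard

/-- `(A,B)` is a homogeneous pair. -/
def HomPair (T : Trigraph V) (A B : Set V) : Prop := ∃ C D E F, T.IsSplit A B C D E F

/-- A small homogeneous pair. -/
def SmallHomPair (T : Trigraph V) (A B : Set V) : Prop :=
  T.HomPair A B ∧ (A ∪ B).ncard ≤ 6

/-- A proper homogeneous pair. -/
def ProperHomPair (T : Trigraph V) (A B : Set V) : Prop :=
  ∃ C D E F, T.IsSplit A B C D E F ∧ C.Nonempty ∧ D.Nonempty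

/-- `(X, Xᶜ)` is a decomposition of `T`. -/
def Decomp (T : Trigraph V) (X : Set V) : Prop :=
  T.HomSet X ∨ ∃ A B, X = A ∪ B ∧ (T.SmallHomPair A B ∨ T.ProperHomPair A B)

/-- `(X, Xᶜ)` is a homogeneous cut of `T`. -/
def HomCut (T : Trigraph V) (X : Set V) : Prop :=
  T.HomSet X ∨ ∃ A B, X = A ∪ B ∧ T.ProperHomPair A B

/-- A minimally-sided homogeneous cut. -/
def MinSidedHomCut (T : Trigraph V) (X : Set V) : Prop :=
  T.HomCut X ∧ ∀ X' : Set V, T.HomCut X' → ¬ X' ⊂ X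

/-- The induced subtrigraph on `X`. -/
def induce (T : Trigraph V) (X : Set V) : Trigraph X where
  θ := fun u v => T.θ u v
  symm := fun u v => T.symm u v
  range := fun u v h => T.range u v (fun hh => h (Subtype.ext hh))

open Classical in
/-- The trigraph obtained from `T[X]` by adding two marker vertices joined by a switchable
pair, the first strongly complete to (the trace in `X` of) `P` and strongly anticomplete to
the rest of `X`, the second strongly complete to `Q` and strongly anticomplete to the rest. -/
noncomputable def augment2 (T : Trigraph V) (X P Q : Set V) : Trigraph (↥X ⊕ Fin 2) where
  θ := fun u v =>
    match u, v with
    | Sum.inl u, Sum.inl v => T.θ u v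
    | Sum.inl u, Sum.inr i => if (i = 0 ∧ (u : V) ∈ P) ∨ (i = 1 ∧ (u : V) ∈ Q) then 1 else -1
    | Sum.inr i, Sum.inl u => if (i = 0 ∧ (u : V) ∈ P) ∨ (i = 1 ∧ (u : V) ∈ Q) then 1 else -1
    | Sum.inr _, Sum.inr _ => 0
  symm := by
    rintro (u | i) (v | j)
    · exact T.symm u v
    · rfl
    · rfl
    · rfl
  range := by
    rintro (u | i) (v | j) h
    · exact T.range u v fun hh => h (by rw [Subtype.ext hh])
    · dsimp only; split <;> simp
    · dsimp only; split <;> simp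
    · simp

/-- The block of decomposition `T_X` for a proper homogeneous pair `(A,B)`:
`T[A ∪ B]` together with marker vertices `c` (strongly complete to `A`) and `d`
(strongly complete to `B`), with `cd` a switchable pair. -/
noncomputable def blockXPair (T : Trigraph V) (A B : Set V) : Trigraph (↥(A ∪ B) ⊕ Fin 2) :=
  T.augment2 (A ∪ B) A B

/-- The block of decomposition `T_Y` for a homogeneous pair `(A,B)` with split
`(A,B,C,D,E,F)` : `T[Y]` (where `Y = (A ∪ B)ᶜ`) together with marker vertices `a`
(strongly complete to `C ∪ E`) and `b` (strongly complete to `D ∪ E`), with `ab` a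
switchable pair. -/
noncomputable def blockYPair (T : Trigraph V) (A B C D E : Set V) : Trigraph (↥(A ∪ B)ᶜ ⊕ Fin 2) :=
  T.augment2 (A ∪ B)ᶜ (C ∪ E) (D ∪ E)


/-- A strong clique: vertices pairwise strongly adjacent. -/
def StrongClique (T : Trigraph V) (K : Set V) : Prop := K.Pairwise T.SEdge

/-- A strong stable set: vertices pairwise strongly antiadjacent. -/
def StrongStable (T : Trigraph V) (K : Set V) : Prop := K.Pairwise T.SAnti

/-- `T[X]` is triangle-free. -/
def TriangleFreeOn (T : Trigraph V) (X : Set V) : Prop :=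
  ∀ x ∈ X, ∀ y ∈ X, ∀ z ∈ X, ¬ (T.Adj x y ∧ T.Adj x z ∧ T.Adj y z)

/-- Membership in the basic class `𝒯₁`. -/
def InT1 (T : Trigraph V) : Prop :=
  T.Monogamous ∧ ∃ (X : Set V) (t : ℕ) (K : Fin t → Set V),
    (X ∪ ⋃ i, K i) = Set.univ ∧
    (∀ i, Disjoint X (K i)) ∧ (∀ i j, i ≠ j → Disjoint (K i) (K j)) ∧
    T.TriangleFreeOn X ∧ (∀ i, T.StrongClique (K i)) ∧
    (∀ i j, i ≠ j → T.SAnticomplete (K i) (K j)) ∧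
    (∀ i, ∀ v ∈ K i, ∃ A B : Set V,
      A ∪ B = {x ∈ X | T.Adj v x} ∧ Disjoint A B ∧
      T.StrongStable A ∧ T.StrongStable B ∧ T.SComplete A B)

/-- Membership in the basic class `𝒯₀`: monogamous trigraphs on at most 8 vertices. -/
def InT0 (T : Trigraph V) : Prop := T.Monogamous ∧ Nat.card V ≤ 8

/-- A basic trigraph: a member of `𝒯₀ ∪ 𝒯₁ ∪ 𝒯₁bar`. -/
def Basic (T : Trigraph V) : Prop := T.InT0 ∨ T.InT1 ∨ T.compl.InT1

/-- `h` lists the vertices of a hole of length `k` in `T`. -/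
def IsHole (T : Trigraph V) (k : ℕ) (h : Fin k → V) : Prop :=
  4 ≤ k ∧ Function.Injective h ∧ ∀ i j : Fin k,
    (((i.val + 1) % k = j.val ∨ (j.val + 1) % k = i.val) → T.Adj (h i) (h j)) ∧
    (i ≠ j → ¬ ((i.val + 1) % k = j.val ∨ (j.val + 1) % k = i.val) → T.Anti (h i) (h j))

def HasOddHole (T : Trigraph V) : Prop := ∃ k, Odd k ∧ ∃ h : Fin k → V, T.IsHole k h

/-- A Berge trigraph: no odd hole and no odd antihole. -/
def Berge (T : Trigraph V) : Prop := ¬ T.HasOddHole ∧ ¬ T.compl.HasOddHole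

/-- `(wv, we)` are legitimate weights for the trigraph `T`: `we` is symmetric and for every
switchable pair `uv` we have `max (wv u) (wv v) ≤ we u v ≤ wv u + wv v`. -/
def GoodWeights (T : Trigraph V) (wv : V → ℕ) (we : V → V → ℕ) : Prop :=
  (∀ u v, we u v = we v u) ∧
  ∀ u v, T.Switch u v → max (wv u) (wv v) ≤ we u v ∧ we u v ≤ wv u + wv v

/-- `S` is a stable set of `T`. -/
def StableF (T : Trigraph V) (S : Finset V) : Prop :=
  ∀ u ∈ S, ∀ v ∈ S, u ≠ v → T.Anti u v

open Classical in
/-- The weight of a stable set `S`: the sum of the weights of the vertices of `S` that are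
strongly antiadjacent to every other vertex of `S`, plus the sum of the weights of the
switchable pairs with both ends in `S`. -/
noncomputable def weightF (T : Trigraph V) (wv : V → ℕ) (we : V → V → ℕ) (S : Finset V) : ℕ :=
  (∑ v ∈ S.filter (fun v => ∀ u ∈ S, u ≠ v → T.SAnti u v), wv v)
    + (∑ u ∈ S, ∑ v ∈ S, if T.Switch u v then we u v else 0) / 2

open Classical in
/-- The maximum weight of a stable set of `T` contained in `X`. -/
noncomputable def alphaOn [Fintype V] (T : Trigraph V) (wv : V → ℕ) (we : V → V → ℕ)
    (X : Set V) : ℕ :=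
  (Finset.univ.powerset.filter fun S : Finset V => ↑S ⊆ X ∧ T.StableF S).sup (T.weightF wv we)

/-- The maximum weight of a stable set of `T`. -/
noncomputable def alphaW [Fintype V] (T : Trigraph V) (wv : V → ℕ) (we : V → V → ℕ) : ℕ :=
  T.alphaOn wv we Set.univ

open Classical in
/-- The trigraph `T_{a → S}` obtained from `T` by turning the switchable pair `ab` into a
strong edge and adding a new vertex `a' = none` strongly complete to `N(a) ∖ {b}` and
strongly anticomplete to everything else (including `a`). -/
noncomputable def expandS (T : Trigraph V) (a b : V) : Trigraph (Option V) where
  θ := fun u v =>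
    match u, v with
    | some u, some v => if (u = a ∧ v = b) ∨ (u = b ∧ v = a) then 1 else T.θ u v
    | some u, none => if T.Adj a u ∧ u ≠ b then 1 else -1
    | none, some v => if T.Adj a v ∧ v ≠ b then 1 else -1
    | none, none => -1
  symm := by
    rintro (_ | u) (_ | v)
    · rfl
    · rfl
    · rfl
    · dsimp only
      have hiff : ((u = a ∧ v = b) ∨ (u = b ∧ v = a)) ↔ ((v = a ∧ u = b) ∨ (v = b ∧ u = a)) := by
        tauto
      rw [if_congr hiff rfl (T.symm u v)]
  range := by
    rintro (_ | u) (_ | v) h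
    · exact absurd rfl h
    · dsimp only; split <;> simp
    · dsimp only; split <;> simp
    · dsimp only
      split
      · simp
      · exact T.range u v fun hh => h (by rw [hh])

open Classical in
/-- The trigraph `T_{a → K}`, defined like `T_{a → S}` except that the new vertex `a'` is in
addition strongly adjacent to `a`. -/
noncomputable def expandK (T : Trigraph V) (a b : V) : Trigraph (Option V) where
  θ := fun u v =>
    match u, v with
    | some u, some v => if (u = a ∧ v = b) ∨ (u = b ∧ v = a) then 1 else T.θ u v
    | some u, none => if (T.Adj a u ∧ u ≠ b) ∨ u = a then 1 else -1
    | none, some v => if (T.Adj a v ∧ v ≠ b) ∨ v = a then 1 else -1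
    | none, none => -1
  symm := by
    rintro (_ | u) (_ | v)
    · rfl
    · rfl
    · rfl
    · dsimp only
      have hiff : ((u = a ∧ v = b) ∨ (u = b ∧ v = a)) ↔ ((v = a ∧ u = b) ∨ (v = b ∧ u = a)) := by
        tauto
      rw [if_congr hiff rfl (T.symm u v)]
  range := by
    rintro (_ | u) (_ | v) h
    · exact absurd rfl h
    · dsimp only; split <;> simp
    · dsimp only; split <;> simp
    · dsimp only
      split
      · simp
      · exact T.range u v fun hh => h (by rw [hh])

/-- Vertex weights for `T_{a → S}`. -/
def wvS (wv : V → ℕ) (we : V → V → ℕ) (a b : V) [DecidableEq V] : Option V → ℕ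
  | some v => if v = a then wv a + wv b - we a b else wv v
  | none => we a b - wv b

/-- Vertex weights for `T_{a → K}`. -/
def wvK (wv : V → ℕ) (we : V → V → ℕ) (a b : V) : Option V → ℕ
  | some v => wv v
  | none => we a b - wv b

/-- Switchable-pair weights for `T_{a → S}` and `T_{a → K}`. -/
def weO (we : V → V → ℕ) : Option V → Option V → ℕ
  | some u, some v => we u v
  | _, _ => 0

end Trigraph

/-!
A stable set `S` of `T` meets the replaced part in a stable set of `T[X]` (resp. of `T[A]`,
`T[B]` or `T[A ∪ B]`, according to which of `A`, `B` it meets), and every vertex of `Y` is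
strongly complete or strongly anticomplete to each of these pieces. Hence `S ∩ Y` is strongly
anticomplete to the rest of `S`, and the rest of `S` can be traded for the corresponding
markers of `T_Y`, whose weight is the largest possible weight of that rest. Conversely, markers
of a stable set of `T_Y` can be traded back for an optimal stable set of the part they replace.
Both blocks are instances of one construction, `Trigraph.MarkerBlock`, in which every marker is
seen from `Y` exactly as every vertex of the part it replaces.
-/

theorem Finset.even_sum_sum_of_symm {ι : Type*} (g : ι → ι → ℕ) (hsymm : ∀ i j, g i j = g j i)
    (hdiag : ∀ i, g i i = 0) (s : Finset ι) : Even (∑ i ∈ s, ∑ j ∈ s, g i j) := by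
  classical
  induction s using Finset.induction with
  | empty => simp
  | insert a s ha ih =>
    obtain ⟨k, hk⟩ := ih
    simp only [Finset.sum_insert ha, hdiag, Finset.sum_add_distrib, zero_add, hsymm _ a]
    exact ⟨(∑ j ∈ s, g a j) + k, by omega⟩

open Classical in
theorem Finset.eq_image_filter_union_filter_of_subset {V W : Type*} [Fintype V] {e : V → W}
    {Y : Set V} {K S : Finset W} (hS : ↑S ⊆ e '' Y ∪ K) :
    S = (univ.filter fun y => y ∈ Y ∧ e y ∈ S).image e ∪ S.filter (· ∈ K) := by
  ext w
  simp only [mem_union, mem_image, mem_filter, mem_univ, true_and]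
  refine ⟨fun hw => ?_, ?_⟩
  · by_cases hwK : w ∈ K
    · exact Or.inr ⟨hw, hwK⟩
    · obtain ⟨y, hy, rfl⟩ := (hS hw).resolve_right hwK
      exact Or.inl ⟨y, ⟨hy, hw⟩, rfl⟩
  · rintro (⟨y, ⟨-, hy⟩, rfl⟩ | ⟨hw, -⟩) <;> assumption

namespace Trigraph

open Finset

variable {V W : Type*} {T : Trigraph V}

theorem SEdge.symm {u v : V} (h : T.SEdge u v) : T.SEdge v u :=
  ⟨h.1.symm, (T.symm v u).trans h.2⟩

theorem SAnti.symm {u v : V} (h : T.SAnti u v) : T.SAnti v u :=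
  ⟨h.1.symm, (T.symm v u).trans h.2⟩

theorem Switch.symm {u v : V} (h : T.Switch u v) : T.Switch v u :=
  ⟨h.1.symm, (T.symm v u).trans h.2⟩

theorem Anti.symm {u v : V} (h : T.Anti u v) : T.Anti v u :=
  ⟨h.1.symm, T.symm v u ▸ h.2⟩

theorem SAnti.anti {u v : V} (h : T.SAnti u v) : T.Anti u v :=
  ⟨h.1, Or.inl h.2⟩

theorem Switch.anti {u v : V} (h : T.Switch u v) : T.Anti u v :=
  ⟨h.1, Or.inr h.2⟩

theorem SAnti.not_switch {u v : V} (h : T.SAnti u v) : ¬ T.Switch u v :=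
  fun hs => by linarith [h.2, hs.2]

theorem not_switch_self (u : V) : ¬ T.Switch u u := fun h => h.1 rfl

theorem Anti.sAnti_of_θ_ne_zero {u v : V} (h : T.Anti u v) (h0 : T.θ u v ≠ 0) :
    T.SAnti u v :=
  ⟨h.1, h.2.resolve_right h0⟩

theorem StableF.mono {S S' : Finset V} (h : T.StableF S) (hsub : S' ⊆ S) : T.StableF S' :=
  fun u hu v hv => h u (hsub hu) v (hsub hv)

theorem stableF_singleton (a : V) : T.StableF {a} := by
  simp [StableF]

theorem stableF_pair [DecidableEq V] {a b : V} (h : T.Anti a b) : T.StableF {a, b} := by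
  intro u hu v hv huv
  simp only [mem_insert, mem_singleton] at hu hv
  rcases hu with rfl | rfl <;> rcases hv with rfl | rfl
  exacts [absurd rfl huv, h, h.symm, absurd rfl huv]

theorem StableF.union [DecidableEq V] {S₁ S₂ : Finset V} (h₁ : T.StableF S₁)
    (h₂ : T.StableF S₂) (h : ∀ u ∈ S₁, ∀ v ∈ S₂, T.SAnti u v) : T.StableF (S₁ ∪ S₂) := by
  intro u hu v hv huv
  rcases mem_union.1 hu with hu | hu <;> rcases mem_union.1 hv with hv | hv
  exacts [h₁ u hu v hv huv, (h u hu v hv).anti, (h v hv u hu).symm.anti, h₂ u hu v hv huv]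

structure EmbedsOn (T : Trigraph V) (T' : Trigraph W) (f : V → W) (Y : Set V) : Prop where
  injOn : Set.InjOn f Y
  θ_eq : ∀ u ∈ Y, ∀ v ∈ Y, u ≠ v → T'.θ (f u) (f v) = T.θ u v

namespace EmbedsOn

variable {T' : Trigraph W} {f : V → W} {Y : Set V}

theorem ne_and_θ_iff (hf : T.EmbedsOn T' f Y) {u v : V} (hu : u ∈ Y) (hv : v ∈ Y)
    (P : ℤ → Prop) : (f u ≠ f v ∧ P (T'.θ (f u) (f v))) ↔ (u ≠ v ∧ P (T.θ u v)) := by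
  rw [hf.injOn.ne_iff hu hv]
  exact and_congr_right fun huv => by rw [hf.θ_eq u hu v hv huv]

theorem sAnti_iff (hf : T.EmbedsOn T' f Y) {u v : V} (hu : u ∈ Y) (hv : v ∈ Y) :
    T'.SAnti (f u) (f v) ↔ T.SAnti u v :=
  hf.ne_and_θ_iff hu hv (· = -1)

theorem switch_iff (hf : T.EmbedsOn T' f Y) {u v : V} (hu : u ∈ Y) (hv : v ∈ Y) :
    T'.Switch (f u) (f v) ↔ T.Switch u v :=
  hf.ne_and_θ_iff hu hv (· = 0)

theorem anti_iff (hf : T.EmbedsOn T' f Y) {u v : V} (hu : u ∈ Y) (hv : v ∈ Y) :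
    T'.Anti (f u) (f v) ↔ T.Anti u v :=
  hf.ne_and_θ_iff hu hv (fun t => t = -1 ∨ t = 0)

theorem stableF_image_iff [DecidableEq W] (hf : T.EmbedsOn T' f Y) {S : Finset V}
    (hS : ↑S ⊆ Y) : T'.StableF (S.image f) ↔ T.StableF S := by
  constructor
  · intro h u hu v hv huv
    exact (hf.anti_iff (hS hu) (hS hv)).1 (h _ (mem_image_of_mem f hu) _
      (mem_image_of_mem f hv) ((hf.injOn.ne_iff (hS hu) (hS hv)).2 huv))
  · rintro h _ hu' _ hv' huv
    obtain ⟨u, hu, rfl⟩ := mem_image.1 hu'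
    obtain ⟨v, hv, rfl⟩ := mem_image.1 hv'
    exact (hf.anti_iff (hS hu) (hS hv)).2 (h u hu v hv fun h => huv (congrArg f h))

end EmbedsOn

section Weight

open Classical

variable {wv : V → ℕ} {we : V → V → ℕ}

theorem weightF_empty : T.weightF wv we ∅ = 0 := by
  simp [weightF]

theorem weightF_singleton (a : V) : T.weightF wv we {a} = wv a := by
  rw [weightF, sum_filter]
  simp [not_switch_self]

theorem weightF_pair [DecidableEq V] {a b : V} (hab : T.Switch a b) (hsym : we a b = we b a) :
    T.weightF wv we {a, b} = we a b := by
  have hne : a ≠ b := hab.1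
  have hab' : ¬ T.SAnti a b := fun h => h.not_switch hab
  have hba' : ¬ T.SAnti b a := fun h => h.not_switch hab.symm
  rw [weightF, sum_filter]
  simp [sum_pair hne, hab, hab.symm, not_switch_self, hsym, hne, hne.symm, hab', hba']
  omega

theorem weightF_union (hsym : ∀ u v, T.Switch u v → we u v = we v u) {S₁ S₂ : Finset V}
    (h : ∀ u ∈ S₁, ∀ v ∈ S₂, T.SAnti u v) :
    T.weightF wv we (S₁ ∪ S₂) = T.weightF wv we S₁ + T.weightF wv we S₂ := by
  have hdisj : Disjoint S₁ S₂ := disjoint_left.2 fun a h₁ h₂ => (h a h₁ a h₂).1 rfl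
  set g : V → V → ℕ := fun u v => if T.Switch u v then we u v else 0 with hg
  have hg_symm : ∀ u v, g u v = g v u := fun u v => by
    by_cases huv : T.Switch u v
    · simp only [hg, if_pos huv, if_pos huv.symm, hsym u v huv]
    · simp only [hg, if_neg huv, if_neg (mt Switch.symm huv)]
  have hg_cross : ∀ u ∈ S₁, ∀ v ∈ S₂, g u v = 0 ∧ g v u = 0 := fun u hu v hv =>
    ⟨if_neg (h u hu v hv).not_switch, if_neg (h u hu v hv).symm.not_switch⟩
  have hiso : (S₁ ∪ S₂).filter (fun v => ∀ u ∈ S₁ ∪ S₂, u ≠ v → T.SAnti u v)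
      = S₁.filter (fun v => ∀ u ∈ S₁, u ≠ v → T.SAnti u v)
        ∪ S₂.filter (fun v => ∀ u ∈ S₂, u ≠ v → T.SAnti u v) := by
    ext v
    simp only [mem_filter, mem_union]
    constructor
    · rintro ⟨hv | hv, hall⟩
      exacts [Or.inl ⟨hv, fun u hu => hall u (Or.inl hu)⟩,
        Or.inr ⟨hv, fun u hu => hall u (Or.inr hu)⟩]
    · rintro (⟨hv, hall⟩ | ⟨hv, hall⟩)
      · exact ⟨Or.inl hv, fun u hu huv => hu.elim (hall u · huv) fun hu => (h v hv u hu).symm⟩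
      · exact ⟨Or.inr hv, fun u hu huv => hu.elim (h u · v hv) fun hu => hall u hu huv⟩
  have hswitch : ∑ u ∈ S₁ ∪ S₂, ∑ v ∈ S₁ ∪ S₂, g u v
      = ∑ u ∈ S₁, ∑ v ∈ S₁, g u v + ∑ u ∈ S₂, ∑ v ∈ S₂, g u v := by
    simp only [sum_union hdisj, sum_add_distrib]
    rw [sum_eq_zero fun u hu => sum_eq_zero fun v hv => (hg_cross u hu v hv).1,
      sum_eq_zero fun u hu => sum_eq_zero fun v hv => (hg_cross v hv u hu).2]
    ring
  -- Each switchable pair is counted twice in these double sums, so halving them is additive.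
  obtain ⟨k₁, hk₁⟩ := even_sum_sum_of_symm g hg_symm (fun u => if_neg (not_switch_self u)) S₁
  obtain ⟨k₂, hk₂⟩ := even_sum_sum_of_symm g hg_symm (fun u => if_neg (not_switch_self u)) S₂
  simp only [weightF, hiso, sum_union (hdisj.mono (filter_subset _ _) (filter_subset _ _))]
  simp only [hg] at hswitch hk₁ hk₂
  omega

theorem EmbedsOn.weightF_image {T' : Trigraph W} {wv' : W → ℕ} {we' : W → W → ℕ} {f : V → W}
    {Y : Set V} (hf : T.EmbedsOn T' f Y) (hwv : ∀ v ∈ Y, wv' (f v) = wv v)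
    (hwe : ∀ u ∈ Y, ∀ v ∈ Y, T.Switch u v → we' (f u) (f v) = we u v) {S : Finset V}
    (hS : ↑S ⊆ Y) : T'.weightF wv' we' (S.image f) = T.weightF wv we S := by
  have hinj : Set.InjOn f S := hf.injOn.mono hS
  have hiso : (S.image f).filter (fun w => ∀ u ∈ S.image f, u ≠ w → T'.SAnti u w)
      = (S.filter (fun v => ∀ u ∈ S, u ≠ v → T.SAnti u v)).image f := by
    rw [filter_image]
    refine congrArg _ (filter_congr fun v hv => ?_)
    rw [forall_mem_image]
    exact forall₂_congr fun u hu => by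
      rw [hf.injOn.ne_iff (hS hu) (hS hv), hf.sAnti_iff (hS hu) (hS hv)]
  have hswitch : ∀ u ∈ S, ∀ v ∈ S, (if T'.Switch (f u) (f v) then we' (f u) (f v) else 0)
      = if T.Switch u v then we u v else 0 := fun u hu v hv => by
    by_cases huv : T.Switch u v
    · rw [if_pos ((hf.switch_iff (hS hu) (hS hv)).2 huv), if_pos huv,
        hwe u (hS hu) v (hS hv) huv]
    · rw [if_neg (mt (hf.switch_iff (hS hu) (hS hv)).1 huv), if_neg huv]
  simp only [weightF, hiso, sum_image (hinj.mono (coe_subset.2 (filter_subset _ _))),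
    sum_image hinj]
  rw [sum_congr rfl fun v hv => hwv v (hS (mem_filter.1 hv).1),
    sum_congr rfl fun u hu => sum_congr rfl fun v hv => hswitch u hu v hv]

variable [Fintype V]

theorem weightF_le_alphaOn {X : Set V} {S : Finset V} (hSX : ↑S ⊆ X) (hS : T.StableF S) :
    T.weightF wv we S ≤ T.alphaOn wv we X :=
  le_sup (mem_filter.2 ⟨mem_powerset.2 (subset_univ _), hSX, hS⟩)

theorem weightF_le_alphaW {S : Finset V} (hS : T.StableF S) :
    T.weightF wv we S ≤ T.alphaW wv we :=
  weightF_le_alphaOn (Set.subset_univ _) hS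

theorem alphaOn_le {X : Set V} {n : ℕ}
    (h : ∀ S : Finset V, ↑S ⊆ X → T.StableF S → T.weightF wv we S ≤ n) :
    T.alphaOn wv we X ≤ n :=
  Finset.sup_le fun S hS => h S (mem_filter.1 hS).2.1 (mem_filter.1 hS).2.2

theorem exists_weightF_eq_alphaOn (X : Set V) :
    ∃ S : Finset V, ↑S ⊆ X ∧ T.StableF S ∧ T.weightF wv we S = T.alphaOn wv we X := by
  obtain ⟨S, hS, hSw⟩ := exists_mem_eq_sup
    (univ.powerset.filter fun S : Finset V => ↑S ⊆ X ∧ T.StableF S)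
    ⟨∅, mem_filter.2 ⟨empty_mem_powerset _, by simp, fun u hu => absurd hu (notMem_empty u)⟩⟩
    (T.weightF wv we)
  exact ⟨S, (mem_filter.1 hS).2.1, (mem_filter.1 hS).2.2, hSw.symm⟩

theorem alphaOn_empty : T.alphaOn wv we ∅ = 0 := by
  obtain ⟨S, hS, -, hSw⟩ := T.exists_weightF_eq_alphaOn (wv := wv) (we := we) ∅
  rw [← hSw, coe_eq_empty.1 (Set.subset_empty_iff.1 hS), weightF_empty]

end Weight

/-- `T'` keeps `T[Y]` (through `e`) and replaces each part `part m` of `V ∖ Y` by a single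
marker `m ∈ K` that is seen from `Y` exactly as every vertex of `part m` is. -/
structure MarkerBlock (T : Trigraph V) (T' : Trigraph W) (e : V → W) (Y : Set V)
    (K : Finset W) (part : W → Set V) : Prop where
  embedsOn : T.EmbedsOn T' e Y
  map_notMem : ∀ y ∈ Y, e y ∉ K
  exists_mem_part : ∀ a ∉ Y, ∃ m ∈ K, a ∈ part m
  notMem_of_mem_part : ∀ m ∈ K, ∀ a ∈ part m, a ∉ Y
  θ_marker : ∀ y ∈ Y, ∀ m ∈ K, ∀ a ∈ part m, T'.θ (e y) m = T.θ y a
  θ_marker_ne_zero : ∀ y ∈ Y, ∀ m ∈ K, T'.θ (e y) m ≠ 0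
  stableF : T'.StableF K

namespace MarkerBlock

variable {T' : Trigraph W} {e : V → W} {Y : Set V} {K : Finset W} {part : W → Set V}

theorem sAnti_of_anti (hB : T.MarkerBlock T' e Y K part) {y a : V} (hy : y ∈ Y) (ha : a ∉ Y)
    (h : T.Anti y a) : T.SAnti y a := by
  obtain ⟨m, hm, ham⟩ := hB.exists_mem_part a ha
  exact h.sAnti_of_θ_ne_zero (hB.θ_marker y hy m hm a ham ▸ hB.θ_marker_ne_zero y hy m hm)

theorem sAnti_marker_of_anti (hB : T.MarkerBlock T' e Y K part) {y : V} {m : W} (hy : y ∈ Y)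
    (hm : m ∈ K) (h : T'.Anti (e y) m) : T'.SAnti (e y) m :=
  h.sAnti_of_θ_ne_zero (hB.θ_marker_ne_zero y hy m hm)

theorem sAnti_marker_iff (hB : T.MarkerBlock T' e Y K part) {y a : V} {m : W} (hy : y ∈ Y)
    (hm : m ∈ K) (ha : a ∈ part m) : T'.SAnti (e y) m ↔ T.SAnti y a := by
  have hne : y ≠ a := fun h => hB.notMem_of_mem_part m hm a ha (h ▸ hy)
  have hne' : e y ≠ m := fun h => hB.map_notMem y hy (h ▸ hm)
  simp only [SAnti, hB.θ_marker y hy m hm a ha, hne, hne', ne_eq, not_false_eq_true, true_and]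

section Weight

open Classical

variable [Fintype V] [Fintype W] {wv : V → ℕ} {we : V → V → ℕ} {wv' : W → ℕ}
  {we' : W → W → ℕ} (hB : T.MarkerBlock T' e Y K part)
  (hsym : ∀ u v, T.Switch u v → we u v = we v u)
  (hsym' : ∀ u v, T'.Switch u v → we' u v = we' v u) (hwv : ∀ v ∈ Y, wv' (e v) = wv v)
  (hwe : ∀ u ∈ Y, ∀ v ∈ Y, T.Switch u v → we' (e u) (e v) = we u v)
  (hK_weight : ∀ M ⊆ K, T'.weightF wv' we' M = T.alphaOn wv we (⋃ m ∈ M, part m))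
include hB hsym hsym' hwv hwe hK_weight

theorem alphaW_le_alphaOn : T.alphaW wv we ≤ T'.alphaOn wv' we' (e '' Y ∪ K) := by
  refine alphaOn_le fun S _ hS => ?_
  set SY := S.filter (· ∈ Y)
  set SX := S.filter (· ∉ Y)
  set M := K.filter fun m => ∃ a ∈ S, a ∈ part m
  have hSY : ↑SY ⊆ Y := fun y hy => (mem_filter.1 hy).2
  have hcross : ∀ y ∈ SY, ∀ a ∈ SX, T.SAnti y a := fun y hy a ha =>
    hB.sAnti_of_anti (mem_filter.1 hy).2 (mem_filter.1 ha).2 (hS y (mem_filter.1 hy).1 a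
      (mem_filter.1 ha).1 fun h => (mem_filter.1 ha).2 (h ▸ (mem_filter.1 hy).2))
  have hcross' : ∀ w ∈ SY.image e, ∀ m ∈ M, T'.SAnti w m := by
    intro w hw m hm
    obtain ⟨y, hy, rfl⟩ := mem_image.1 hw
    obtain ⟨hmK, a, haS, ham⟩ := mem_filter.1 hm
    have haY : a ∉ Y := hB.notMem_of_mem_part m hmK a ham
    refine (hB.sAnti_marker_iff (hSY hy) hmK ham).2 (hB.sAnti_of_anti (hSY hy) haY ?_)
    exact hS y (mem_filter.1 hy).1 a haS fun h => haY (h ▸ hSY hy)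
  have hSX_le : T.weightF wv we SX ≤ T'.weightF wv' we' M := by
    rw [hK_weight M (filter_subset _ _)]
    refine weightF_le_alphaOn (fun a ha => ?_) (hS.mono (filter_subset _ _))
    obtain ⟨haS, haY⟩ := mem_filter.1 ha
    obtain ⟨m, hm, ham⟩ := hB.exists_mem_part a haY
    exact Set.mem_biUnion (mem_filter.2 ⟨hm, a, haS, ham⟩) ham
  have hstable : T'.StableF (SY.image e ∪ M) :=
    ((hB.embedsOn.stableF_image_iff hSY).2 (hS.mono (filter_subset _ _))).union
      (hB.stableF.mono (filter_subset _ _)) hcross'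
  calc T.weightF wv we S = T.weightF wv we SY + T.weightF wv we SX := by
        rw [← weightF_union hsym hcross, filter_union_filter_not_eq]
    _ ≤ T'.weightF wv' we' (SY.image e) + T'.weightF wv' we' M := by
        rw [hB.embedsOn.weightF_image hwv hwe hSY]
        exact Nat.add_le_add_left hSX_le _
    _ = T'.weightF wv' we' (SY.image e ∪ M) := (weightF_union hsym' hcross').symm
    _ ≤ T'.alphaOn wv' we' (e '' Y ∪ K) := by
        refine weightF_le_alphaOn ?_ hstable
        rw [coe_union, coe_image]
        exact Set.union_subset_union (Set.image_mono hSY) (coe_subset.2 (filter_subset _ _))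

theorem alphaOn_le_alphaW : T'.alphaOn wv' we' (e '' Y ∪ K) ≤ T.alphaW wv we := by
  refine alphaOn_le fun S' hS'Y hS' => ?_
  set SY := univ.filter fun y => y ∈ Y ∧ e y ∈ S'
  set M := S'.filter (· ∈ K)
  have hSY : ↑SY ⊆ Y := fun y hy => (mem_filter.1 hy).2.1
  have hS'_eq : S' = SY.image e ∪ M := eq_image_filter_union_filter_of_subset hS'Y
  obtain ⟨SM, hSM_sub, hSM, hSM_w⟩ := T.exists_weightF_eq_alphaOn (wv := wv) (we := we)
    (⋃ m ∈ M, part m)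
  have hmarker : ∀ y ∈ SY, ∀ m ∈ M, T'.SAnti (e y) m := fun y hy m hm =>
    hB.sAnti_marker_of_anti (hSY hy) (mem_filter.1 hm).2 (hS' _ (mem_filter.1 hy).2.2 m
      (mem_filter.1 hm).1 fun h => hB.map_notMem y (hSY hy) (h ▸ (mem_filter.1 hm).2))
  have hcross : ∀ y ∈ SY, ∀ a ∈ SM, T.SAnti y a := by
    intro y hy a ha
    obtain ⟨m, hm, ham⟩ := Set.mem_iUnion₂.1 (hSM_sub ha)
    exact (hB.sAnti_marker_iff (hSY hy) (mem_filter.1 hm).2 ham).1 (hmarker y hy m hm)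
  have hcross' : ∀ w ∈ SY.image e, ∀ m ∈ M, T'.SAnti w m := by
    rintro _ hw m hm
    obtain ⟨y, hy, rfl⟩ := mem_image.1 hw
    exact hmarker y hy m hm
  have hstable : T.StableF (SY ∪ SM) :=
    ((hB.embedsOn.stableF_image_iff hSY).1 (hS'.mono (hS'_eq ▸ subset_union_left))).union
      hSM hcross
  calc T'.weightF wv' we' S' = T'.weightF wv' we' (SY.image e) + T'.weightF wv' we' M := by
        rw [← weightF_union hsym' hcross', ← hS'_eq]
    _ = T.weightF wv we SY + T.weightF wv we SM := by
        rw [hB.embedsOn.weightF_image hwv hwe hSY, hSM_w,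
          hK_weight M fun m hm => (mem_filter.1 hm).2]
    _ = T.weightF wv we (SY ∪ SM) := (weightF_union hsym hcross).symm
    _ ≤ T.alphaW wv we := weightF_le_alphaW hstable

theorem alphaW_eq_alphaOn : T.alphaW wv we = T'.alphaOn wv' we' (e '' Y ∪ K) :=
  (hB.alphaW_le_alphaOn hsym hsym' hwv hwe hK_weight).antisymm
    (hB.alphaOn_le_alphaW hsym hsym' hwv hwe hK_weight)

end Weight

end MarkerBlock

section Homogeneous

variable {X : Set V} (hX : ∀ v ∉ X, (∀ a ∈ X, T.SEdge v a) ∨ (∀ a ∈ X, T.SAnti v a))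
  {x : V} (hx : x ∈ X)
include hX hx

theorem markerBlock_homogeneous : T.MarkerBlock T id Xᶜ {x} fun _ => X where
  embedsOn := ⟨Set.injOn_id _, fun _ _ _ _ _ => rfl⟩
  map_notMem y hy := by simpa using fun h : y = x => hy (h ▸ hx)
  exists_mem_part a ha := ⟨x, mem_singleton_self x, Set.not_notMem.1 ha⟩
  notMem_of_mem_part _ _ a ha := Set.not_notMem.2 ha
  θ_marker y hy m hm a ha := by
    rw [mem_singleton.1 hm]
    rcases hX y hy with h | h
    exacts [(h x hx).2.trans (h a ha).2.symm, (h x hx).2.trans (h a ha).2.symm]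
  θ_marker_ne_zero y hy m hm := by
    rw [mem_singleton.1 hm]
    show T.θ y x ≠ 0
    rcases hX y hy with h | h <;> rw [(h x hx).2] <;> decide
  stableF := stableF_singleton x

theorem alphaW_eq_alphaOn_update_of_homogeneous [Fintype V] [DecidableEq V] {wv : V → ℕ}
    {we : V → V → ℕ} (hsym : ∀ u v, T.Switch u v → we u v = we v u) :
    T.alphaW wv we = T.alphaOn (Function.update wv x (T.alphaOn wv we X)) we (Xᶜ ∪ {x}) := by
  have h := (markerBlock_homogeneous hX hx).alphaW_eq_alphaOn
    (wv' := Function.update wv x (T.alphaOn wv we X)) hsym hsym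
    (fun v hv => Function.update_of_ne (ne_of_mem_of_not_mem hx hv).symm _ _)
    (fun _ _ _ _ _ => rfl) fun M hM => by
      rcases subset_singleton_iff.1 hM with rfl | rfl
      · simp [weightF_empty, alphaOn_empty]
      · simp [weightF_singleton]
  rwa [Set.image_id, coe_singleton] at h

end Homogeneous

section Augment

open Classical

variable {X P Q : Set V}

/-- The vertex of `T.augment2 X P Q` representing `v`; junk value `Sum.inr 0` for `v ∉ X`. -/
noncomputable def augmentInl (X : Set V) (v : V) : ↥X ⊕ Fin 2 :=
  if h : v ∈ X then Sum.inl ⟨v, h⟩ else Sum.inr 0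

theorem augmentInl_of_mem {v : V} (hv : v ∈ X) : augmentInl X v = Sum.inl ⟨v, hv⟩ :=
  dif_pos hv

theorem image_augmentInl_union_markers (X : Set V) :
    augmentInl X '' X ∪ ↑({Sum.inr 0, Sum.inr 1} : Finset (↥X ⊕ Fin 2)) = Set.univ := by
  refine Set.eq_univ_of_forall fun p => ?_
  rcases p with u | i
  · exact Or.inl ⟨u, u.2, augmentInl_of_mem u.2⟩
  · fin_cases i <;> simp

theorem augment2_θ_inl_inr_zero (u : ↥X) :
    (T.augment2 X P Q).θ (Sum.inl u) (Sum.inr 0) = if (u : V) ∈ P then 1 else -1 := by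
  simp [augment2]

theorem augment2_θ_inl_inr_one (u : ↥X) :
    (T.augment2 X P Q).θ (Sum.inl u) (Sum.inr 1) = if (u : V) ∈ Q then 1 else -1 := by
  simp [augment2]

theorem augment2_switch_markers : (T.augment2 X P Q).Switch (Sum.inr 0) (Sum.inr 1) :=
  ⟨by simp, rfl⟩

theorem embedsOn_augment2 : T.EmbedsOn (T.augment2 X P Q) (augmentInl X) X where
  injOn u hu v hv h := by
    rw [augmentInl_of_mem hu, augmentInl_of_mem hv] at h
    exact congrArg Subtype.val (Sum.inl_injective h)
  θ_eq u hu v hv _ := by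
    rw [augmentInl_of_mem hu, augmentInl_of_mem hv]
    rfl

theorem markerBlock_augment2 {A B : Set V}
    (hA : ∀ y ∈ (A ∪ B)ᶜ, ∀ a ∈ A, (y ∈ P → T.SEdge y a) ∧ (y ∉ P → T.SAnti y a))
    (hB : ∀ y ∈ (A ∪ B)ᶜ, ∀ b ∈ B, (y ∈ Q → T.SEdge y b) ∧ (y ∉ Q → T.SAnti y b)) :
    T.MarkerBlock (T.augment2 (A ∪ B)ᶜ P Q) (augmentInl (A ∪ B)ᶜ) (A ∪ B)ᶜ
      {Sum.inr 0, Sum.inr 1} (Sum.elim (fun _ => ∅) fun i => if i = 0 then A else B) where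
  embedsOn := embedsOn_augment2
  map_notMem y hy := by simp [augmentInl_of_mem hy]
  exists_mem_part a ha := by
    rcases Set.not_notMem.1 ha with ha | ha
    exacts [⟨Sum.inr 0, by simp, by simpa⟩, ⟨Sum.inr 1, by simp, by simpa⟩]
  notMem_of_mem_part m hm a ha := by
    rcases mem_insert.1 hm with rfl | hm
    · exact Set.not_notMem.2 (Or.inl (by simpa using ha))
    · rw [mem_singleton.1 hm] at ha
      exact Set.not_notMem.2 (Or.inr (by simpa using ha))
  θ_marker y hy m hm a ha := by
    rw [augmentInl_of_mem hy]
    rcases mem_insert.1 hm with rfl | hm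
    · have ha : a ∈ A := by simpa using ha
      rw [augment2_θ_inl_inr_zero]
      split_ifs with hyP
      exacts [((hA y hy a ha).1 hyP).2.symm, ((hA y hy a ha).2 hyP).2.symm]
    · have ha : a ∈ B := by simpa [mem_singleton.1 hm] using ha
      rw [mem_singleton.1 hm, augment2_θ_inl_inr_one]
      split_ifs with hyQ
      exacts [((hB y hy a ha).1 hyQ).2.symm, ((hB y hy a ha).2 hyQ).2.symm]
  θ_marker_ne_zero y hy m hm := by
    rw [augmentInl_of_mem hy]
    rcases mem_insert.1 hm with rfl | hm
    · rw [augment2_θ_inl_inr_zero]; split_ifs <;> decide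
    · rw [mem_singleton.1 hm, augment2_θ_inl_inr_one]; split_ifs <;> decide
  stableF := stableF_pair augment2_switch_markers.anti

end Augment

section Split

open Classical

variable {A B C D E F : Set V}

theorem IsSplit.sEdge_sAnti_left (h : T.IsSplit A B C D E F) :
    ∀ y ∈ (A ∪ B)ᶜ, ∀ a ∈ A, (y ∈ C ∪ E → T.SEdge y a) ∧ (y ∉ C ∪ E → T.SAnti y a) := by
  obtain ⟨-, -, -, -, -, -, -, -, -, hcover, hACE, hADF, -⟩ := h
  intro y hy a ha
  rw [← hcover] at hy
  refine ⟨fun hyCE => (hACE a ha y hyCE).symm, fun hyCE => (hADF a ha y ?_).symm⟩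
  rcases hy with ((hyC | hyD) | hyE) | hyF
  exacts [absurd (Or.inl hyC) hyCE, Or.inl hyD, absurd (Or.inr hyE) hyCE, Or.inr hyF]

theorem IsSplit.sEdge_sAnti_right (h : T.IsSplit A B C D E F) :
    ∀ y ∈ (A ∪ B)ᶜ, ∀ b ∈ B, (y ∈ D ∪ E → T.SEdge y b) ∧ (y ∉ D ∪ E → T.SAnti y b) := by
  obtain ⟨-, -, -, -, -, -, -, -, -, hcover, -, -, hBDE, hBCF, -⟩ := h
  intro y hy b hb
  rw [← hcover] at hy
  refine ⟨fun hyDE => (hBDE b hb y hyDE).symm, fun hyDE => (hBCF b hb y ?_).symm⟩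
  rcases hy with ((hyC | hyD) | hyE) | hyF
  exacts [Or.inl hyC, absurd (Or.inl hyD) hyDE, absurd (Or.inr hyE) hyDE, Or.inr hyF]

theorem IsSplit.alphaW_eq_alphaW_blockYPair [Fintype V] {wv : V → ℕ} {we : V → V → ℕ}
    (hsym : ∀ u v, T.Switch u v → we u v = we v u) (h : T.IsSplit A B C D E F)
    {we' : ↥(A ∪ B)ᶜ ⊕ Fin 2 → ↥(A ∪ B)ᶜ ⊕ Fin 2 → ℕ}
    (hsym' : ∀ p q, (T.blockYPair A B C D E).Switch p q → we' p q = we' q p)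
    (hwe' : ∀ u v, we' (Sum.inl u) (Sum.inl v) = we u v)
    (hwe'_markers : we' (Sum.inr 0) (Sum.inr 1) = T.alphaOn wv we (A ∪ B)) :
    T.alphaW wv we =
      (T.blockYPair A B C D E).alphaW
        (Sum.elim (fun u => wv ↑u)
          (fun i => if i = 0 then T.alphaOn wv we A else T.alphaOn wv we B)) we' := by
  have hB := markerBlock_augment2 h.sEdge_sAnti_left h.sEdge_sAnti_right
  rw [hB.alphaW_eq_alphaOn hsym hsym', image_augmentInl_union_markers]
  · rfl
  · intro v hv
    rw [augmentInl_of_mem hv]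
    rfl
  · intro u hu v hv _
    rw [augmentInl_of_mem hu, augmentInl_of_mem hv, hwe']
  · intro M hM
    rw [← coe_subset, coe_pair, Set.subset_pair_iff_eq] at hM
    simp only [coe_eq_empty, coe_eq_singleton, coe_eq_pair] at hM
    rcases hM with rfl | rfl | rfl | rfl
    · simp [weightF_empty, alphaOn_empty]
    · simp [weightF_singleton]
    · simp [weightF_singleton]
    · rw [weightF_pair augment2_switch_markers (hsym' _ _ augment2_switch_markers),
        hwe'_markers]
      simp

end Split

end Trigraph

open Classical in
theorem alpha_eq_alpha_blockY {V : Type} [Fintype V] [DecidableEq V] (T : Trigraph V)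
    (wv : V → ℕ) (we : V → V → ℕ) (hw : T.GoodWeights wv we) :
    (∀ X : Set V, T.HomSet X → ∀ x ∈ X,
      T.alphaW wv we =
        T.alphaOn (Function.update wv x (T.alphaOn wv we X)) we (Xᶜ ∪ {x})) ∧
    (∀ A B C D E F : Set V, T.IsSplit A B C D E F →
      ((A ∪ B).ncard ≤ 6 ∨ (C.Nonempty ∧ D.Nonempty)) →
      T.alphaW wv we =
        (T.blockYPair A B C D E).alphaW
          (Sum.elim (fun u => wv ↑u)
            (fun i => if i = 0 then T.alphaOn wv we A else T.alphaOn wv we B))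
          (fun p q =>
            match p, q with
            | Sum.inl u, Sum.inl v => we ↑u ↑v
            | Sum.inr _, Sum.inr _ => T.alphaOn wv we (A ∪ B)
            | _, _ => 0)) := by
  have hsym : ∀ u v, T.Switch u v → we u v = we v u := fun u v _ => hw.1 u v
  refine ⟨fun X hX x hx => Trigraph.alphaW_eq_alphaOn_update_of_homogeneous hX.2.2 hx hsym,
    fun A B C D E F h _ => Trigraph.IsSplit.alphaW_eq_alphaW_blockYPair hsym h ?_
      (fun _ _ => rfl) rfl⟩
  rintro (u | i) (v | j) _
  exacts [hw.1 u v, rfl, rfl, rfl]
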